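/- arXiv:1007.3967 — 5 statements merged into one kernel-verified Lean document; each statement's English description precedes it below -/
import Mathlib

section
/- Let U ⊆ ℝ² be open, n ≥ 1, and let f : U → ℝⁿ be a smooth conformal immersion with conformal factor u. With A_{ij} := ∂²_{ij} f − e^{−2u}(⟨∂²_{ij} f, ∂_1 f⟩ ∂_1 f + ⟨∂²_{ij} f, ∂_2 f⟩ ∂_2 f), one has at every point of U: ⟨A_{11}, A_{22}⟩ − |A_{12}|² = ⟨∂²_{11} f, ∂²_{22} f⟩ − |∂²_{12} f|² + 2 e^{2u} |Du|², where |Du|² = (∂_1 u)² + (∂_2 u)². -/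
open MeasureTheory Real Filter Topology

noncomputable section

/-- First partial derivative in the `i`-th coordinate direction. -/
def pd {E : Type*} [NormedAddCommGroup E] [NormedSpace ℝ E]
    (f : EuclideanSpace ℝ (Fin 2) → E) (i : Fin 2) (x : EuclideanSpace ℝ (Fin 2)) : E :=
  fderiv ℝ f x (EuclideanSpace.single i 1)

/-- Second partial derivative `∂_i ∂_j`. -/
def pd2 {E : Type*} [NormedAddCommGroup E] [NormedSpace ℝ E]
    (f : EuclideanSpace ℝ (Fin 2) → E) (i j : Fin 2) (x : EuclideanSpace ℝ (Fin 2)) : E :=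
  pd (pd f j) i x

/-- `f` is a smooth conformal immersion on `U` with conformal factor `u`,
i.e. `⟨∂_i f, ∂_j f⟩ = e^{2u} δ_{ij}` on `U`. -/
def IsConfImm {n : ℕ} (U : Set (EuclideanSpace ℝ (Fin 2)))
    (f : EuclideanSpace ℝ (Fin 2) → EuclideanSpace ℝ (Fin n))
    (u : EuclideanSpace ℝ (Fin 2) → ℝ) : Prop :=
  ContDiffOn ℝ (⊤ : ℕ∞) f U ∧ ContDiffOn ℝ (⊤ : ℕ∞) u U ∧
    ∀ x ∈ U, ∀ i j : Fin 2,
      (inner ℝ (pd f i x) (pd f j x) : ℝ) = Real.exp (2 * u x) * (if i = j then 1 else 0)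

/-- Second fundamental form `A_{ij}`: the normal component of the Hessian. -/
def sff {n : ℕ} (f : EuclideanSpace ℝ (Fin 2) → EuclideanSpace ℝ (Fin n))
    (u : EuclideanSpace ℝ (Fin 2) → ℝ) (i j : Fin 2) (x : EuclideanSpace ℝ (Fin 2)) :
    EuclideanSpace ℝ (Fin n) :=
  pd2 f i j x - Real.exp (-(2 * u x)) •
    ((inner ℝ (pd2 f i j x) (pd f 0 x) : ℝ) • pd f 0 x +
     (inner ℝ (pd2 f i j x) (pd f 1 x) : ℝ) • pd f 1 x)

/-!
Differentiating the conformality relation `⟨∂_i f, ∂_j f⟩ = e^{2u} δ_{ij}` and using the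
symmetry of the Hessian, the Koszul trick yields the tangential components
`⟨∂_{ij} f, ∂_k f⟩ = e^{2u} (δ_{jk} ∂_i u + δ_{ik} ∂_j u − δ_{ij} ∂_k u)`.
Since `A_{ij}` is `∂_{ij} f` minus its projection onto the tangent plane, which has the
orthogonal basis `∂_1 f, ∂_2 f` of squared length `e^{2u}`,
`⟨A_{ij}, A_{kl}⟩ = ⟨∂_{ij} f, ∂_{kl} f⟩ − e^{−2u} Σ_m ⟨∂_{ij} f, ∂_m f⟩ ⟨∂_{kl} f, ∂_m f⟩`,
and inserting the tangential components the correction terms add up to `2 e^{2u} |Du|²`.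
-/

open scoped RealInnerProductSpace

section InnerProduct

variable {F : Type*} [NormedAddCommGroup F] [InnerProductSpace ℝ F]

theorem inner_sub_tangential_sub_tangential {t₀ t₁ : F} {e : ℝ} (he : e ≠ 0)
    (h₀ : ⟪t₀, t₀⟫ = e) (h₁ : ⟪t₁, t₁⟫ = e) (h₀₁ : ⟪t₀, t₁⟫ = 0) (a b : F) :
    ⟪a - e⁻¹ • (⟪a, t₀⟫ • t₀ + ⟪a, t₁⟫ • t₁), b - e⁻¹ • (⟪b, t₀⟫ • t₀ + ⟪b, t₁⟫ • t₁)⟫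
      = ⟪a, b⟫ - e⁻¹ * (⟪a, t₀⟫ * ⟪b, t₀⟫ + ⟪a, t₁⟫ * ⟪b, t₁⟫) := by
  have h₁₀ : ⟪t₁, t₀⟫ = 0 := by rw [real_inner_comm, h₀₁]
  simp only [inner_sub_left, inner_sub_right, inner_add_left, inner_add_right,
    real_inner_smul_left, real_inner_smul_right, h₀, h₁, h₀₁, h₁₀,
    real_inner_comm t₀, real_inner_comm t₁]
  field_simp
  ring

theorem pd_inner {g h : EuclideanSpace ℝ (Fin 2) → F} {x : EuclideanSpace ℝ (Fin 2)}
    (hg : DifferentiableAt ℝ g x) (hh : DifferentiableAt ℝ h x) (k : Fin 2) :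
    pd (fun y => ⟪g y, h y⟫) k x = ⟪pd g k x, h x⟫ + ⟪g x, pd h k x⟫ := by
  rw [pd, fderiv_inner_apply ℝ hg hh, add_comm]
  rfl

end InnerProduct

theorem koszul_formula {ι : Type*} {Γ D : ι → ι → ι → ℝ} (hΓ : ∀ i j k, Γ i j k = Γ j i k)
    (hD : ∀ k i j, Γ k i j + Γ k j i = D k i j) (i j k : ι) :
    Γ i j k = (D i j k + D j i k - D k i j) / 2 := by
  linarith [hD i j k, hD j i k, hD k i j, hΓ i j k, hΓ i k j, hΓ j k i]

section PartialDerivatives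

variable {E : Type*} [NormedAddCommGroup E] [NormedSpace ℝ E]
  {f : EuclideanSpace ℝ (Fin 2) → E} {x : EuclideanSpace ℝ (Fin 2)}

theorem Filter.EventuallyEq.pd_eq {g : EuclideanSpace ℝ (Fin 2) → E} (h : f =ᶠ[𝓝 x] g)
    (i : Fin 2) : pd f i x = pd g i x := by
  rw [pd, pd, h.fderiv_eq]

theorem ContDiffAt.differentiableAt_pd (hf : ContDiffAt ℝ 2 f x) (i : Fin 2) :
    DifferentiableAt ℝ (pd f i) x :=
  ((hf.fderiv_right le_rfl).clm_apply contDiffAt_const).differentiableAt one_ne_zero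

theorem pd2_eq_fderiv_fderiv (hf : DifferentiableAt ℝ (fderiv ℝ f) x) (i j : Fin 2) :
    pd2 f i j x
      = fderiv ℝ (fderiv ℝ f) x (EuclideanSpace.single i 1) (EuclideanSpace.single j 1) := by
  change fderiv ℝ (fun y => fderiv ℝ f y (EuclideanSpace.single j 1)) x _ = _
  rw [fderiv_clm_apply hf (differentiableAt_const _)]
  simp

theorem ContDiffAt.pd2_comm (hf : ContDiffAt ℝ 2 f x) (i j : Fin 2) :
    pd2 f i j x = pd2 f j i x := by
  have hdf := (hf.fderiv_right (m := 1) le_rfl).differentiableAt one_ne_zero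
  rw [pd2_eq_fderiv_fderiv hdf, pd2_eq_fderiv_fderiv hdf]
  exact hf.isSymmSndFDerivAt (by simp [minSmoothness_of_isRCLikeNormedField]) _ _

end PartialDerivatives

theorem pd_exp_two_mul_mul_const {u : EuclideanSpace ℝ (Fin 2) → ℝ}
    {x : EuclideanSpace ℝ (Fin 2)} (hu : DifferentiableAt ℝ u x) (c : ℝ) (k : Fin 2) :
    pd (fun y => exp (2 * u y) * c) k x = exp (2 * u x) * (2 * pd u k x) * c := by
  rw [pd, ((hu.hasFDerivAt.const_mul 2).exp.mul_const c).fderiv]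
  simp only [smul_apply, smul_eq_mul, pd]
  ring

section ConformalImmersion

variable {n : ℕ} {U : Set (EuclideanSpace ℝ (Fin 2))}
  {f : EuclideanSpace ℝ (Fin 2) → EuclideanSpace ℝ (Fin n)}
  {u : EuclideanSpace ℝ (Fin 2) → ℝ} {x : EuclideanSpace ℝ (Fin 2)}

theorem IsConfImm.contDiffAt (hf : IsConfImm U f u) (hU : IsOpen U) (hx : x ∈ U) :
    ContDiffAt ℝ 2 f x :=
  ((hf.1 x hx).contDiffAt (hU.mem_nhds hx)).of_le
    (ENat.natCast_le_of_coe_top_le_withTop le_rfl 2)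

theorem IsConfImm.differentiableAt_conformalFactor (hf : IsConfImm U f u) (hU : IsOpen U)
    (hx : x ∈ U) : DifferentiableAt ℝ u x :=
  ((hf.2.1 x hx).contDiffAt (hU.mem_nhds hx)).differentiableAt (by simp)

theorem IsConfImm.inner_pd2_add_inner_pd2 (hf : IsConfImm U f u) (hU : IsOpen U) (hx : x ∈ U)
    (k i j : Fin 2) :
    ⟪pd2 f k i x, pd f j x⟫ + ⟪pd2 f k j x, pd f i x⟫
      = exp (2 * u x) * (2 * pd u k x) * (if i = j then 1 else 0) := by
  have hmetric : (fun y => ⟪pd f i y, pd f j y⟫) =ᶠ[𝓝 x]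
      fun y => exp (2 * u y) * (if i = j then 1 else 0) :=
    Filter.eventually_of_mem (hU.mem_nhds hx) fun y hy => hf.2.2 y hy i j
  have hfx := hf.contDiffAt hU hx
  rw [← pd_exp_two_mul_mul_const (hf.differentiableAt_conformalFactor hU hx), ← hmetric.pd_eq,
    pd_inner (hfx.differentiableAt_pd i) (hfx.differentiableAt_pd j), real_inner_comm (pd f i x)]
  rfl

-- The Christoffel symbols of the metric `e^{2u} δ`.
theorem IsConfImm.inner_pd2_pd (hf : IsConfImm U f u) (hU : IsOpen U) (hx : x ∈ U)
    (i j k : Fin 2) :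
    ⟪pd2 f i j x, pd f k x⟫ = exp (2 * u x) * (pd u i x * (if j = k then 1 else 0)
      + pd u j x * (if i = k then 1 else 0) - pd u k x * (if i = j then 1 else 0)) := by
  rw [koszul_formula (fun i j k => by rw [(hf.contDiffAt hU hx).pd2_comm i j])
    (hf.inner_pd2_add_inner_pd2 hU hx) i j k]
  split_ifs <;> ring

end ConformalImmersion

theorem stmt2_general {n : ℕ} (U : Set (EuclideanSpace ℝ (Fin 2))) (hU : IsOpen U)
    (f : EuclideanSpace ℝ (Fin 2) → EuclideanSpace ℝ (Fin n))
    (u : EuclideanSpace ℝ (Fin 2) → ℝ) (hf : IsConfImm U f u) :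
    ∀ x ∈ U,
      (inner ℝ (sff f u 0 0 x) (sff f u 1 1 x) : ℝ) - ‖sff f u 0 1 x‖ ^ 2 =
        (inner ℝ (pd2 f 0 0 x) (pd2 f 1 1 x) : ℝ) - ‖pd2 f 0 1 x‖ ^ 2
          + 2 * Real.exp (2 * u x) * ((pd u 0 x) ^ 2 + (pd u 1 x) ^ 2) := by
  intro x hx
  have hmetric := hf.2.2 x hx
  have hnormal := inner_sub_tangential_sub_tangential (exp_pos (2 * u x)).ne'
    (by simpa using hmetric 0 0) (by simpa using hmetric 1 1) (by simpa using hmetric 0 1)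
  simp only [sff, exp_neg, ← real_inner_self_eq_norm_sq, hnormal]
  simp only [hf.inner_pd2_pd hU hx, Fin.isValue, Fin.reduceEq, ↓reduceIte]
  field_simp
  ring

/-- Gauß-type identity:
`⟨A_{11}, A_{22}⟩ − |A_{12}|² = ⟨∂²_{11} f, ∂²_{22} f⟩ − |∂²_{12} f|² + 2 e^{2u} |Du|²`. -/
theorem stmt2 {n : ℕ} (hn : 1 ≤ n) (U : Set (EuclideanSpace ℝ (Fin 2))) (hU : IsOpen U)
    (f : EuclideanSpace ℝ (Fin 2) → EuclideanSpace ℝ (Fin n))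
    (u : EuclideanSpace ℝ (Fin 2) → ℝ) (hf : IsConfImm U f u) :
    ∀ x ∈ U,
      (inner ℝ (sff f u 0 0 x) (sff f u 1 1 x) : ℝ) - ‖sff f u 0 1 x‖ ^ 2 =
        (inner ℝ (pd2 f 0 0 x) (pd2 f 1 1 x) : ℝ) - ‖pd2 f 0 1 x‖ ^ 2
          + 2 * Real.exp (2 * u x) * ((pd u 0 x) ^ 2 + (pd u 1 x) ^ 2) :=
  stmt2_general U hU f u hf
end
end

section
/- Let U ⊆ ℂ be open and connected and let f : U → ℂ be a C² map (viewing ℂ ≅ ℝ²) which is harmonic, i.e. ∂²_{xx} f + ∂²_{yy} f = 0 on U, and conformal in the sense that |∂_x f(z)| = |∂_y f(z)| and Re(∂_x f(z) · conj(∂_y f(z))) = 0 for all z ∈ U. Then either f is holomorphic on U, or the conjugate map z ↦ conj(f(z)) is holomorphic on U. -/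
/-!
Write `∂f = f_x - i f_y` (twice the Wirtinger derivative). For a harmonic `C²` map, the Laplace
equation and the symmetry of the second derivative are exactly the Cauchy–Riemann equations for
`∂f`, so `∂f` and `∂(conj ∘ f) = conj (f_x + i f_y)` are holomorphic. Conformality says
`f_x² + f_y² = (f_x - i f_y)(f_x + i f_y) = 0`, so the product of these two holomorphic functions
vanishes. On a connected open set one factor then vanishes identically, and `f_x + i f_y = 0`,
resp. `f_x - i f_y = 0`, is the Cauchy–Riemann equation for `f`, resp. `conj ∘ f`.
-/

open Complex Filter Topology

noncomputable section

/-- Partial derivative of `f : ℂ → ℂ` in the real coordinate direction. -/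
def pdx (f : ℂ → ℂ) (z : ℂ) : ℂ := fderiv ℝ f z 1

/-- Partial derivative of `f : ℂ → ℂ` in the imaginary coordinate direction. -/
def pdy (f : ℂ → ℂ) (z : ℂ) : ℂ := fderiv ℝ f z Complex.I

open scoped ComplexConjugate

/-- Twice the Wirtinger derivative `∂f/∂z`. -/
def dz (f : ℂ → ℂ) (z : ℂ) : ℂ := pdx f z - I * pdy f z

theorem differentiableAt_complex_iff_pdy {f : ℂ → ℂ} {z : ℂ} :
    DifferentiableAt ℂ f z ↔ DifferentiableAt ℝ f z ∧ pdy f z = I * pdx f z :=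
  differentiableAt_complex_iff_differentiableAt_real

theorem fderiv_conj_apply (f : ℂ → ℂ) (z v : ℂ) :
    fderiv ℝ (fun w => conj (f w)) z v = conj (fderiv ℝ f z v) := by
  change fderiv ℝ (conjCLE ∘ f) z v = _
  rw [conjCLE.comp_fderiv]
  rfl

theorem pdx_conj (f : ℂ → ℂ) : pdx (fun w => conj (f w)) = fun z => conj (pdx f z) :=
  funext fun z => fderiv_conj_apply f z 1

theorem pdy_conj (f : ℂ → ℂ) : pdy (fun w => conj (f w)) = fun z => conj (pdy f z) :=
  funext fun z => fderiv_conj_apply f z I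

theorem dz_conj (f : ℂ → ℂ) (z : ℂ) :
    dz (fun w => conj (f w)) z = conj (pdx f z + I * pdy f z) := by
  simp [dz, pdx_conj, pdy_conj, sub_eq_add_neg]

theorem differentiableAt_conj_of_dz_eq_zero {f : ℂ → ℂ} {z : ℂ} (hf : DifferentiableAt ℝ f z)
    (h : dz f z = 0) : DifferentiableAt ℂ (fun w => conj (f w)) z := by
  refine differentiableAt_complex_iff_pdy.2 ⟨differentiable_conj.differentiableAt.comp z hf, ?_⟩
  have h' := congrArg conj h
  simp only [dz, map_sub, map_mul, conj_I, map_zero] at h'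
  rw [pdx_conj, pdy_conj]
  linear_combination (-I) * h' + conj (pdy f z) * I_sq

theorem hasFDerivAt_fderiv_apply {f : ℂ → ℂ} {z : ℂ} (h : DifferentiableAt ℝ (fderiv ℝ f) z)
    (v : ℂ) : HasFDerivAt (fun w => fderiv ℝ f w v) ((fderiv ℝ (fderiv ℝ f) z).flip v) z :=
  h.hasFDerivAt.clm_apply (hasFDerivAt_const v z) |>.congr_fderiv (by ext; simp)

theorem differentiableAt_dz_of_harmonic {f : ℂ → ℂ} {z : ℂ} (hf : ContDiffAt ℝ 2 f z)
    (hharm : pdx (pdx f) z + pdy (pdy f) z = 0) : DifferentiableAt ℂ (dz f) z := by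
  set A := fderiv ℝ (fderiv ℝ f) z
  have hA : DifferentiableAt ℝ (fderiv ℝ f) z :=
    (hf.fderiv_right (m := 1) le_rfl).differentiableAt one_ne_zero
  have hsymm : A I 1 = A 1 I := hf.isSymmSndFDerivAt (by simp) I 1
  have hlap : A 1 1 + A I I = 0 := by
    rw [← hharm]
    change _ = fderiv ℝ (fun w => fderiv ℝ f w 1) z 1 + fderiv ℝ (fun w => fderiv ℝ f w I) z I
    rw [(hasFDerivAt_fderiv_apply hA 1).fderiv, (hasFDerivAt_fderiv_apply hA I).fderiv]
    rfl
  have hD : HasFDerivAt (dz f) ((A.flip 1) - I • A.flip I) z :=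
    (hasFDerivAt_fderiv_apply hA 1).sub ((hasFDerivAt_fderiv_apply hA I).const_smul I)
  refine differentiableAt_complex_iff_pdy.2 ⟨hD.differentiableAt, ?_⟩
  simp only [pdx, pdy, hD.fderiv, sub_apply, smul_apply,
    ContinuousLinearMap.flip_apply, smul_eq_mul]
  linear_combination hsymm - I * hlap + A 1 I * I_sq

theorem analyticOnNhd_dz_of_harmonic {U : Set ℂ} (hU : IsOpen U) {f : ℂ → ℂ}
    (hf : ContDiffOn ℝ 2 f U) (hharm : ∀ z ∈ U, pdx (pdx f) z + pdy (pdy f) z = 0) :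
    AnalyticOnNhd ℂ (dz f) U :=
  DifferentiableOn.analyticOnNhd (fun z hz => (differentiableAt_dz_of_harmonic
    (hf.contDiffAt (hU.mem_nhds hz)) (hharm z hz)).differentiableWithinAt) hU

theorem sub_I_mul_eq_zero_or_add_I_mul_eq_zero {a b : ℂ} (h₁ : ‖a‖ = ‖b‖)
    (h₂ : (a * conj b).re = 0) : a - I * b = 0 ∨ a + I * b = 0 := by
  have hn : normSq a = normSq b := by rw [← Complex.sq_norm, ← Complex.sq_norm, h₁]
  rw [normSq_apply, normSq_apply] at hn
  have hi : a.re * b.re + a.im * b.im = 0 := by simpa using h₂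
  have hsq : a ^ 2 + b ^ 2 = 0 := by
    apply Complex.ext <;> simp only [add_re, add_im, sq, mul_re, mul_im, zero_re, zero_im] <;>
      nlinarith [sq_nonneg (a.re - b.im), sq_nonneg (a.im + b.re), sq_nonneg (a.re + b.im),
        sq_nonneg (a.im - b.re)]
  rw [← mul_eq_zero]
  linear_combination hsq - b ^ 2 * I_sq

/-- A harmonic conformal `C²` map on a connected open set `U ⊆ ℂ` is holomorphic or
antiholomorphic. -/
theorem stmt6 (U : Set ℂ) (hU : IsOpen U) (hconn : IsConnected U)
    (f : ℂ → ℂ) (hf : ContDiffOn ℝ 2 f U)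
    (hharm : ∀ z ∈ U, pdx (pdx f) z + pdy (pdy f) z = 0)
    (hc1 : ∀ z ∈ U, ‖pdx f z‖ = ‖pdy f z‖)
    (hc2 : ∀ z ∈ U, (pdx f z * (starRingEnd ℂ) (pdy f z)).re = 0) :
    (∀ z ∈ U, DifferentiableAt ℂ f z) ∨
      (∀ z ∈ U, DifferentiableAt ℂ (fun w => (starRingEnd ℂ) (f w)) z) := by
  set g : ℂ → ℂ := fun w => conj (f w)
  have hg : ContDiffOn ℝ 2 g U := conjCLE.contDiff.comp_contDiffOn hf
  have hgharm : ∀ z ∈ U, pdx (pdx g) z + pdy (pdy g) z = 0 := fun z hz => by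
    simp only [g, pdx_conj, pdy_conj, ← map_add, hharm z hz, map_zero]
  have hmul : ∀ z ∈ U, dz f z * dz g z = 0 := fun z hz => by
    rw [mul_eq_zero, dz_conj, map_eq_zero]
    exact sub_I_mul_eq_zero_or_add_I_mul_eq_zero (hc1 z hz) (hc2 z hz)
  have hdiff {φ : ℂ → ℂ} (hφ : ContDiffOn ℝ 2 φ U) {z : ℂ} (hz : z ∈ U) :
      DifferentiableAt ℝ φ z :=
    (hφ.differentiableOn two_ne_zero).differentiableAt (hU.mem_nhds hz)
  rcases (analyticOnNhd_dz_of_harmonic hU hf hharm).eq_zero_or_eq_zero_of_mul_eq_zero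
    (analyticOnNhd_dz_of_harmonic hU hg hgharm) hmul hconn.isPreconnected with h | h
  · exact .inr fun z hz => differentiableAt_conj_of_dz_eq_zero (hdiff hf hz) (h z hz)
  · refine .inl fun z hz => ?_
    simpa [g] using differentiableAt_conj_of_dz_eq_zero (hdiff hg hz) (h z hz)
end
end

section
/- For every q ∈ [1,2) there is a constant C = C(q) < ∞ with the following property: for every integrable function F : ℝ² → ℝ, every p ∈ ℝ² and every r > 0, the Riesz-type potential w(x) := ∫_{ℝ²} |F(y)| / |x−y| dy satisfies ∫_{B_r(p)} w(x)^q dx ≤ C r^{2−q} (∫_{ℝ²} |F(y)| dy)^q. -/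
/-!
Put `f = |F|`. Hölder's inequality against the weight `f` gives
`w(x)^q ≤ ‖f‖₁^(q-1) ∫ f(y) |x - y|^(-q) dy`, so after Tonelli everything reduces to the bound
`∫_{B_r(p)} |x - y|^(-q) dx ≤ C r^(2-q)` uniformly in `p` and `y`. Outside `B_r(y)` the integrand
is at most `r^(-q)`; on `B_r(y)` scaling gives exactly `r^(2-q) ∫_{B_1(0)} |x|^(-q) dx`, which is
finite because `q < 2`.
-/

open MeasureTheory Real Metric Module
open scoped ENNReal

section KernelInequality

variable {α β : Type*} [MeasurableSpace α] [MeasurableSpace β]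

theorem rpow_lintegral_mul_le {μ : Measure α} {q : ℝ} (hq : 1 ≤ q) {f g : α → ℝ≥0∞}
    (hf : AEMeasurable f μ) (hg : AEMeasurable g μ) :
    (∫⁻ a, f a * g a ∂μ) ^ q ≤ (∫⁻ a, f a ∂μ) ^ (q - 1) * ∫⁻ a, f a * g a ^ q ∂μ := by
  have hq0 : 0 < q := by linarith
  have hsplit : ∀ a, f a * g a = f a ^ (1 - q⁻¹) * (f a * g a ^ q) ^ q⁻¹ := fun a => by
    rw [ENNReal.mul_rpow_of_nonneg _ _ (by positivity), ← ENNReal.rpow_mul,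
      mul_inv_cancel₀ hq0.ne', ENNReal.rpow_one, ← mul_assoc, ← ENNReal.rpow_add_of_nonneg _ _ (by
        simpa using inv_le_one_of_one_le₀ hq) (by positivity), sub_add_cancel, ENNReal.rpow_one]
  have holder : ∫⁻ a, f a * g a ∂μ ≤
      (∫⁻ a, f a ∂μ) ^ (1 - q⁻¹) * (∫⁻ a, f a * g a ^ q ∂μ) ^ q⁻¹ :=
    (lintegral_congr hsplit).trans_le <| ENNReal.lintegral_mul_norm_pow_le hf
      (hf.mul (hg.pow_const q)) (by simpa using inv_le_one_of_one_le₀ hq) (by positivity)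
      (sub_add_cancel _ _)
  calc (∫⁻ a, f a * g a ∂μ) ^ q
      ≤ ((∫⁻ a, f a ∂μ) ^ (1 - q⁻¹) * (∫⁻ a, f a * g a ^ q ∂μ) ^ q⁻¹) ^ q :=
        ENNReal.rpow_le_rpow holder hq0.le
    _ = (∫⁻ a, f a ∂μ) ^ (q - 1) * ∫⁻ a, f a * g a ^ q ∂μ := by
        rw [ENNReal.mul_rpow_of_nonneg _ _ hq0.le, ← ENNReal.rpow_mul, ← ENNReal.rpow_mul,
          inv_mul_cancel₀ hq0.ne', ENNReal.rpow_one, sub_mul, one_mul, inv_mul_cancel₀ hq0.ne']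

theorem lintegral_rpow_lintegral_mul_le {μ : Measure α} {ν : Measure β} [SFinite μ] [SFinite ν]
    {q : ℝ} (hq : 1 ≤ q) {f : β → ℝ≥0∞} {k : α → β → ℝ≥0∞} (hf : AEMeasurable f ν)
    (hk : Measurable (Function.uncurry k)) {K : ℝ≥0∞} (hK : ∀ y, ∫⁻ x, k x y ^ q ∂μ ≤ K) :
    ∫⁻ x, (∫⁻ y, f y * k x y ∂ν) ^ q ∂μ ≤ (∫⁻ y, f y ∂ν) ^ q * K := by
  set I := ∫⁻ y, f y ∂ν
  have hkq : AEMeasurable (Function.uncurry fun x y => f y * k x y ^ q) (μ.prod ν) :=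
    hf.comp_snd.mul (hk.pow_const q).aemeasurable
  calc ∫⁻ x, (∫⁻ y, f y * k x y ∂ν) ^ q ∂μ
      ≤ ∫⁻ x, I ^ (q - 1) * ∫⁻ y, f y * k x y ^ q ∂ν ∂μ :=
        lintegral_mono fun x => rpow_lintegral_mul_le hq hf (hk.of_uncurry_left).aemeasurable
    _ = I ^ (q - 1) * ∫⁻ y, f y * ∫⁻ x, k x y ^ q ∂μ ∂ν := by
        have hT : AEMeasurable (fun x => ∫⁻ y, f y * k x y ^ q ∂ν) μ := hkq.lintegral_prod_right'
        rw [lintegral_const_mul'' _ hT, lintegral_lintegral_swap hkq]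
        congr 1
        exact lintegral_congr fun y =>
          lintegral_const_mul _ (hk.of_uncurry_right.pow_const q)
    _ ≤ I ^ (q - 1) * (I * K) := by
        rw [← lintegral_mul_const'' _ hf]
        gcongr with y
        exact hK y
    _ = I ^ q * K := by
        conv_rhs => rw [← sub_add_cancel q 1,
          ENNReal.rpow_add_of_nonneg _ _ (by linarith) zero_le_one, ENNReal.rpow_one]
        rw [mul_assoc]

end KernelInequality

section RieszKernel

variable {E : Type*} [NormedAddCommGroup E] [NormedSpace ℝ E] [FiniteDimensional ℝ E]
  [MeasurableSpace E] [BorelSpace E] (μ : Measure E) [μ.IsAddHaarMeasure]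

theorem lintegral_eq_ofReal_pow_mul_lintegral_comp_smul (f : E → ℝ≥0∞) {R : ℝ} (hR : 0 < R) :
    ∫⁻ x, f x ∂μ = ENNReal.ofReal (R ^ finrank ℝ E) * ∫⁻ x, f (R • x) ∂μ := by
  have hmap := lintegral_map_equiv f (MeasurableEquiv.smul₀ R hR.ne') (μ := μ)
  rw [MeasurableEquiv.coe_smul₀, Measure.map_addHaar_smul μ hR.ne', lintegral_smul_measure,
    abs_of_pos (by positivity)] at hmap
  rw [← hmap, smul_eq_mul, ← mul_assoc, ← ENNReal.ofReal_mul (by positivity),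
    mul_inv_cancel₀ (by positivity), ENNReal.ofReal_one, one_mul]

theorem setLIntegral_ball_rpow_neg_norm_sub (α : ℝ) (y : E) {r : ℝ} (hr : 0 < r) :
    ∫⁻ x in ball y r, ENNReal.ofReal (‖x - y‖ ^ (-α)) ∂μ =
      ENNReal.ofReal (r ^ ((finrank ℝ E : ℝ) - α)) *
        ∫⁻ x in ball 0 1, ENNReal.ofReal (‖x‖ ^ (-α)) ∂μ := by
  have hscale : ∀ z : E,
      (ball y r).indicator (fun x => ENNReal.ofReal (‖x - y‖ ^ (-α))) (y + r • z) =
        ENNReal.ofReal (r ^ (-α)) *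
          (ball 0 1).indicator (fun x => ENNReal.ofReal (‖x‖ ^ (-α))) z := by
    intro z
    have hmem : y + r • z ∈ ball y r ↔ z ∈ ball 0 1 := by
      simp [dist_eq_norm, norm_smul, abs_of_pos hr, hr]
    by_cases hz : z ∈ ball (0 : E) 1
    · rw [Set.indicator_of_mem (hmem.2 hz), Set.indicator_of_mem hz, ← ENNReal.ofReal_mul
        (by positivity), add_sub_cancel_left, norm_smul, norm_of_nonneg hr.le,
        mul_rpow hr.le (norm_nonneg _)]
    · rw [Set.indicator_of_notMem (mt hmem.1 hz), Set.indicator_of_notMem hz, mul_zero]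
  rw [← lintegral_indicator measurableSet_ball, ← lintegral_add_left_eq_self _ y,
    lintegral_eq_ofReal_pow_mul_lintegral_comp_smul μ _ hr]
  simp_rw [hscale]
  rw [lintegral_const_mul' _ _ ENNReal.ofReal_ne_top, lintegral_indicator measurableSet_ball,
    ← mul_assoc, ← ENNReal.ofReal_mul (by positivity), ← rpow_natCast, ← rpow_add hr,
    sub_eq_add_neg]

variable [Nontrivial E]

theorem setLIntegral_unitBall_rpow_neg_norm_lt_top {α : ℝ} (hα : α < finrank ℝ E) :
    ∫⁻ x in ball 0 1, ENNReal.ofReal (‖x‖ ^ (-α)) ∂μ < ∞ := by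
  refine Integrable.lintegral_lt_top (integrableOn_ball_of_norm_le_rpow (C := 1) finrank_pos hα
    (ae_of_all _ fun x => ?_) (measurable_norm.pow_const _).aestronglyMeasurable)
  rw [one_mul, norm_of_nonneg (by positivity)]

theorem setLIntegral_ball_rpow_neg_norm_sub_le {α : ℝ} (hα : 0 ≤ α) (p y : E) {r : ℝ}
    (hr : 0 < r) :
    ∫⁻ x in ball p r, ENNReal.ofReal (‖x - y‖ ^ (-α)) ∂μ ≤
      (μ (ball 0 1) + ∫⁻ x in ball 0 1, ENNReal.ofReal (‖x‖ ^ (-α)) ∂μ) *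
        ENNReal.ofReal (r ^ ((finrank ℝ E : ℝ) - α)) := by
  have hfar : ∫⁻ x in ball p r \ ball y r, ENNReal.ofReal (‖x - y‖ ^ (-α)) ∂μ ≤
      μ (ball 0 1) * ENNReal.ofReal (r ^ ((finrank ℝ E : ℝ) - α)) := by
    calc ∫⁻ x in ball p r \ ball y r, ENNReal.ofReal (‖x - y‖ ^ (-α)) ∂μ
        ≤ ∫⁻ _ in ball p r, ENNReal.ofReal (r ^ (-α)) ∂μ := by
          refine (setLIntegral_mono measurable_const fun x hx => ?_).trans
            (lintegral_mono_set Set.sdiff_subset)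
          have hxy : r ≤ ‖x - y‖ := by simpa [dist_eq_norm] using hx.2
          exact ENNReal.ofReal_le_ofReal (rpow_le_rpow_of_nonpos hr hxy (neg_nonpos.2 hα))
      _ = μ (ball 0 1) * ENNReal.ofReal (r ^ ((finrank ℝ E : ℝ) - α)) := by
          rw [setLIntegral_const, Measure.addHaar_ball μ p hr.le, ← mul_assoc,
            ← ENNReal.ofReal_mul (by positivity), mul_comm, ← rpow_natCast, ← rpow_add hr,
            neg_add_eq_sub]
  calc ∫⁻ x in ball p r, ENNReal.ofReal (‖x - y‖ ^ (-α)) ∂μ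
      ≤ ∫⁻ x in (ball p r \ ball y r) ∪ ball y r, ENNReal.ofReal (‖x - y‖ ^ (-α)) ∂μ :=
        lintegral_mono_set (Set.subset_sdiff_union _ _)
    _ ≤ _ := (lintegral_union_le _ _ _).trans <| by
        rw [add_mul]
        exact add_le_add hfar (by rw [setLIntegral_ball_rpow_neg_norm_sub μ α y hr, mul_comm])

theorem exists_setLIntegral_ball_rpow_neg_norm_sub_le {α : ℝ} (hα₀ : 0 ≤ α)
    (hα : α < finrank ℝ E) :
    ∃ C : ℝ, 0 < C ∧ ∀ (p y : E) {r : ℝ}, 0 < r →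
      ∫⁻ x in ball p r, ENNReal.ofReal (‖x - y‖ ^ (-α)) ∂μ ≤
        ENNReal.ofReal (C * r ^ ((finrank ℝ E : ℝ) - α)) := by
  set M := μ (ball 0 1) + ∫⁻ x in ball 0 1, ENNReal.ofReal (‖x‖ ^ (-α)) ∂μ
  have hM : M ≠ ∞ := ENNReal.add_ne_top.2
    ⟨measure_ball_lt_top.ne, (setLIntegral_unitBall_rpow_neg_norm_lt_top μ hα).ne⟩
  have hM₀ : M ≠ 0 := ((measure_ball_pos μ 0 one_pos).trans_le le_self_add).ne'
  refine ⟨M.toReal, ENNReal.toReal_pos hM₀ hM, fun p y r hr => ?_⟩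
  rw [ENNReal.ofReal_mul ENNReal.toReal_nonneg, ENNReal.ofReal_toReal hM]
  exact setLIntegral_ball_rpow_neg_norm_sub_le μ hα₀ p y hr

end RieszKernel

/-- Riesz-potential estimate: for `q ∈ [1,2)` there is `C = C(q)` such that for integrable `F`,
`∫_{B_r(p)} (∫ |F(y)|/|x−y| dy)^q dx ≤ C r^{2−q} (∫ |F|)^q`. -/
theorem stmt12 (q : ℝ) (hq : q ∈ Set.Ico (1 : ℝ) 2) :
    ∃ C : ℝ, 0 < C ∧
      ∀ F : EuclideanSpace ℝ (Fin 2) → ℝ, Integrable F →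
        ∀ p : EuclideanSpace ℝ (Fin 2), ∀ r : ℝ, 0 < r →
          (∫⁻ x in Metric.ball p r,
              (∫⁻ y, ENNReal.ofReal (|F y| / ‖x - y‖)) ^ q)
            ≤ ENNReal.ofReal (C * r ^ (2 - q) * (∫ y, |F y|) ^ q) := by
  obtain ⟨hq₁, hq₂⟩ := hq
  have hq₀ : 0 ≤ q := by linarith
  obtain ⟨C, hC, hker⟩ := exists_setLIntegral_ball_rpow_neg_norm_sub_le
    (volume : Measure (EuclideanSpace ℝ (Fin 2))) hq₀ (by simpa using hq₂)
  refine ⟨C, hC, fun F hF p r hr => ?_⟩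
  have hkq : ∀ x y : EuclideanSpace ℝ (Fin 2),
      ENNReal.ofReal (‖x - y‖ ^ (-1 : ℝ)) ^ q = ENNReal.ofReal (‖x - y‖ ^ (-q)) := fun x y => by
    rw [ENNReal.ofReal_rpow_of_nonneg (by positivity) hq₀, ← rpow_mul (norm_nonneg _), neg_one_mul]
  have hpot := lintegral_rpow_lintegral_mul_le (μ := volume.restrict (ball p r)) hq₁
    (k := fun x y => ENNReal.ofReal (‖x - y‖ ^ (-1 : ℝ))) hF.aemeasurable.abs.ennreal_ofReal
    (by fun_prop) (K := ENNReal.ofReal (C * r ^ (2 - q)))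
    (fun y => by simpa [hkq] using hker p y hr)
  convert hpot using 3 with x
  · refine congrArg (· ^ q) (lintegral_congr fun y => ?_)
    rw [rpow_neg_one, ← ENNReal.ofReal_mul (abs_nonneg _), div_eq_mul_inv]
  · have hI : 0 ≤ ∫ y, |F y| := integral_nonneg fun y => abs_nonneg _
    rw [← ofReal_integral_eq_lintegral_ofReal hF.abs (ae_of_all _ fun y => abs_nonneg _),
      ENNReal.ofReal_rpow_of_nonneg hI hq₀, ← ENNReal.ofReal_mul (by positivity), mul_comm]
end

section
/- For ε > 0 let f_ε : ℂ → ℂ² ≅ ℝ⁴, f_ε(z) = (½ z², ε z), which is a smooth conformal immersion with conformal factor u_ε(z) = ½ log(|z|² + ε²). Then its second fundamental form satisfies ∫_D |A|²_{g_ε} dμ_{g_ε} = 4π/(1 + ε²); in particular this quantity is strictly less than 4π for every ε > 0. -/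
open MeasureTheory Real Filter Topology

noncomputable section

/-- `|A|²_g = e^{-4u} Σ_{i,j} |A_{ij}|²`. -/
def normASq {n : ℕ} (f : EuclideanSpace ℝ (Fin 2) → EuclideanSpace ℝ (Fin n))
    (u : EuclideanSpace ℝ (Fin 2) → ℝ) (x : EuclideanSpace ℝ (Fin 2)) : ℝ :=
  Real.exp (-(4 * u x)) * ∑ i : Fin 2, ∑ j : Fin 2, ‖sff f u i j x‖ ^ 2

/-- The map `f_ε(z) = (½ z², ε z) : ℂ → ℂ² ≅ ℝ⁴`, written in real coordinates
`z = x₀ + i x₁`. -/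
def fEps (ε : ℝ) (x : EuclideanSpace ℝ (Fin 2)) : EuclideanSpace ℝ (Fin 4) :=
  (WithLp.equiv 2 (Fin 4 → ℝ)).symm ![(x 0 ^ 2 - x 1 ^ 2) / 2, x 0 * x 1, ε * x 0, ε * x 1]

/-- The conformal factor `u_ε(z) = ½ log(|z|² + ε²)` of `f_ε`. -/
def uEps (ε : ℝ) (x : EuclideanSpace ℝ (Fin 2)) : ℝ :=
  (1 / 2) * Real.log (x 0 ^ 2 + x 1 ^ 2 + ε ^ 2)

/-!
Writing `f_ε(z) = (z²/2, εz)`, the coordinate derivatives `∂_x f = (z, ε)` and `∂_y f = i ∂_x f` are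
orthogonal of squared length `|z|² + ε² = e^{2u}`, and the Hessian entries are the constant unit vectors
`±(1, 0)` and `(i, 0)`. Removing their tangential part leaves `|A_{ij}|² = 1 - |z|²/(|z|² + ε²)`, so
`|A|² e^{2u} = 4ε²/(|z|² + ε²)²` is radial, and polar coordinates give
`2π ∫₀¹ 4ε² r/(r² + ε²)² dr = 4π/(1 + ε²)`.
-/

open scoped InnerProductSpace

local notation "ℝ²" => EuclideanSpace ℝ (Fin 2)

theorem fderiv_euclideanSpace_apply {ι : Type*} [Fintype ι] (x : EuclideanSpace ℝ ι) (j : ι) :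
    fderiv ℝ (fun y : EuclideanSpace ℝ ι => y j) x = EuclideanSpace.proj j :=
  (PiLp.hasFDerivAt_apply 2 x j).fderiv

theorem pd_toLp_vecFour {g₀ g₁ g₂ g₃ : ℝ² → ℝ} {x : ℝ²} (h₀ : DifferentiableAt ℝ g₀ x)
    (h₁ : DifferentiableAt ℝ g₁ x) (h₂ : DifferentiableAt ℝ g₂ x) (h₃ : DifferentiableAt ℝ g₃ x)
    (i : Fin 2) :
    pd (fun y => !₂[g₀ y, g₁ y, g₂ y, g₃ y]) i x =
      !₂[pd g₀ i x, pd g₁ i x, pd g₂ i x, pd g₃ i x] := by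
  have hf : DifferentiableAt ℝ (fun y => !₂[g₀ y, g₁ y, g₂ y, g₃ y]) x :=
    (differentiableAt_piLp 2).2 fun k => by fin_cases k <;> assumption
  ext k
  have hk := ((PiLp.hasFDerivAt_apply 2 _ k).comp x hf.hasFDerivAt).fderiv
  fin_cases k <;> exact (congrArg (· (EuclideanSpace.single i 1)) hk).symm

theorem inner_toLp_vecFour (a b c d a' b' c' d' : ℝ) :
    ⟪!₂[a, b, c, d], !₂[a', b', c', d']⟫_ℝ = a * a' + b * b' + c * c' + d * d' := by
  simp only [PiLp.inner_apply, RCLike.inner_apply, ringHom_apply, Fin.sum_univ_four,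
    Matrix.cons_val_zero, Matrix.cons_val_one, Matrix.cons_val]
  ring

theorem norm_toLp_vecFour_sq (a b c d : ℝ) : ‖!₂[a, b, c, d]‖ ^ 2 = a ^ 2 + b ^ 2 + c ^ 2 + d ^ 2 := by
  simp [EuclideanSpace.norm_sq_eq, Fin.sum_univ_four]

theorem norm_sub_inv_smul_inner_add_sq {F : Type*} [NormedAddCommGroup F] [InnerProductSpace ℝ F]
    {p q : F} {c : ℝ} (hc : c ≠ 0) (hp : ⟪p, p⟫_ℝ = c) (hq : ⟪q, q⟫_ℝ = c) (hpq : ⟪p, q⟫_ℝ = 0)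
    (h : F) :
    ‖h - c⁻¹ • (⟪h, p⟫_ℝ • p + ⟪h, q⟫_ℝ • q)‖ ^ 2 =
      ‖h‖ ^ 2 - c⁻¹ * (⟪h, p⟫_ℝ ^ 2 + ⟪h, q⟫_ℝ ^ 2) := by
  rw [← real_inner_self_eq_norm_sq, ← real_inner_self_eq_norm_sq]
  simp only [inner_sub_left, inner_sub_right, inner_add_left, inner_add_right, inner_smul_left,
    inner_smul_right, real_inner_comm p h, real_inner_comm q h, real_inner_comm p q, hp, hq, hpq,
    RCLike.conj_to_real]
  field_simp
  ring

theorem norm_sff_sq {n : ℕ} {f : ℝ² → EuclideanSpace ℝ (Fin n)} {u : ℝ² → ℝ} {x : ℝ²}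
    (hconf : ∀ i j : Fin 2,
      ⟪pd f i x, pd f j x⟫_ℝ = Real.exp (2 * u x) * if i = j then 1 else 0)
    (i j : Fin 2) :
    ‖sff f u i j x‖ ^ 2 = ‖pd2 f i j x‖ ^ 2 - Real.exp (-(2 * u x)) *
      (⟪pd2 f i j x, pd f 0 x⟫_ℝ ^ 2 + ⟪pd2 f i j x, pd f 1 x⟫_ℝ ^ 2) := by
  rw [sff, Real.exp_neg]
  exact norm_sub_inv_smul_inner_add_sq (Real.exp_pos _).ne' (by simpa using hconf 0 0)
    (by simpa using hconf 1 1) (by simpa using hconf 0 1) _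

open Set in
theorem setIntegral_ball_fun_norm_fin_two (g : ℝ → ℝ) {R : ℝ} (hR : 0 ≤ R) :
    ∫ x in Metric.ball (0 : ℝ²) R, g ‖x‖ = 2 * π * ∫ r in (0)..R, r * g r := by
  have hvol : volume.real (Metric.ball (0 : ℝ²) 1) = π := by
    simp [Measure.real, Real.pi_nonneg]
  calc ∫ x in Metric.ball (0 : ℝ²) R, g ‖x‖
      = ∫ x : ℝ², (Iio R).indicator g ‖x‖ := by
        rw [← integral_indicator measurableSet_ball]
        congr 1 with x
        by_cases h : ‖x‖ < R <;> simp [h]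
    _ = 2 * π * ∫ r in Ioi 0, (Iio R).indicator (fun r => r * g r) r := by
        rw [integral_fun_norm_addHaar volume, finrank_euclideanSpace, hvol]
        simp [indicator_mul_right, mul_assoc]
    _ = 2 * π * ∫ r in (0)..R, r * g r := by
        rw [setIntegral_indicator measurableSet_Iio, Ioi_inter_Iio,
          intervalIntegral.integral_of_le hR, integral_Ioc_eq_integral_Ioo]

theorem integral_mul_four_mul_sq_div_sq_add_sq_sq {ε : ℝ} (hε : ε ≠ 0) :
    ∫ r in (0)..1, r * (4 * ε ^ 2 / (r ^ 2 + ε ^ 2) ^ 2) = 2 / (1 + ε ^ 2) := by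
  have hderiv : ∀ r ∈ Set.uIcc (0 : ℝ) 1,
      HasDerivAt (fun r => -(2 * ε ^ 2) * (r ^ 2 + ε ^ 2)⁻¹)
        (r * (4 * ε ^ 2 / (r ^ 2 + ε ^ 2) ^ 2)) r := by
    intro r _
    have h := (((hasDerivAt_pow 2 r).add_const (ε ^ 2)).inv (by positivity)).const_mul
      (-(2 * ε ^ 2))
    refine h.congr_deriv ?_
    field_simp
    ring
  rw [intervalIntegral.integral_eq_sub_of_hasDerivAt hderiv
    (by apply Continuous.intervalIntegrable; fun_prop (disch := intros; positivity))]
  field_simp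
  ring

theorem pd_fEps_zero (ε : ℝ) : pd (fEps ε) 0 = fun x => !₂[x 0, x 1, ε, 0] := by
  ext1 x
  unfold fEps
  rw [WithLp.equiv_symm_apply,
    pd_toLp_vecFour (by fun_prop) (by fun_prop) (by fun_prop) (by fun_prop)]
  simp (disch := first | fun_prop | norm_num) [pd, div_eq_mul_inv, fderiv_mul_const,
    fderiv_const_mul, fderiv_euclideanSpace_apply, fderiv_fun_sub, fderiv_fun_pow, fderiv_fun_mul]

theorem pd_fEps_one (ε : ℝ) : pd (fEps ε) 1 = fun x => !₂[-x 1, x 0, 0, ε] := by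
  ext1 x
  unfold fEps
  rw [WithLp.equiv_symm_apply,
    pd_toLp_vecFour (by fun_prop) (by fun_prop) (by fun_prop) (by fun_prop)]
  simp (disch := first | fun_prop | norm_num) [pd, div_eq_mul_inv, fderiv_mul_const,
    fderiv_const_mul, fderiv_euclideanSpace_apply, fderiv_fun_sub, fderiv_fun_pow, fderiv_fun_mul]

theorem pd2_fEps_zero_zero (ε : ℝ) (x : ℝ²) : pd2 (fEps ε) 0 0 x = !₂[1, 0, 0, 0] := by
  rw [pd2, pd_fEps_zero, pd_toLp_vecFour (by fun_prop) (by fun_prop) (by fun_prop) (by fun_prop)]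
  simp [pd, fderiv_euclideanSpace_apply]

theorem pd2_fEps_zero_one (ε : ℝ) (x : ℝ²) : pd2 (fEps ε) 0 1 x = !₂[0, 1, 0, 0] := by
  rw [pd2, pd_fEps_one, pd_toLp_vecFour (by fun_prop) (by fun_prop) (by fun_prop) (by fun_prop)]
  simp [pd, fderiv_euclideanSpace_apply]

theorem pd2_fEps_one_zero (ε : ℝ) (x : ℝ²) : pd2 (fEps ε) 1 0 x = !₂[0, 1, 0, 0] := by
  rw [pd2, pd_fEps_zero, pd_toLp_vecFour (by fun_prop) (by fun_prop) (by fun_prop) (by fun_prop)]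
  simp [pd, fderiv_euclideanSpace_apply]

theorem pd2_fEps_one_one (ε : ℝ) (x : ℝ²) : pd2 (fEps ε) 1 1 x = !₂[-1, 0, 0, 0] := by
  rw [pd2, pd_fEps_one, pd_toLp_vecFour (by fun_prop) (by fun_prop) (by fun_prop) (by fun_prop)]
  simp [pd, fderiv_euclideanSpace_apply]

theorem exp_two_mul_uEps {ε : ℝ} (hε : ε ≠ 0) (x : ℝ²) :
    Real.exp (2 * uEps ε x) = x 0 ^ 2 + x 1 ^ 2 + ε ^ 2 := by
  rw [uEps, ← mul_assoc, mul_one_div_cancel two_ne_zero, one_mul, Real.exp_log (by positivity)]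

theorem inner_pd_fEps {ε : ℝ} (hε : ε ≠ 0) (x : ℝ²) (i j : Fin 2) :
    ⟪pd (fEps ε) i x, pd (fEps ε) j x⟫_ℝ = Real.exp (2 * uEps ε x) * if i = j then 1 else 0 := by
  rw [exp_two_mul_uEps hε]
  fin_cases i <;> fin_cases j <;>
    simp only [Fin.zero_eta, Fin.mk_one, Fin.isValue, pd_fEps_zero, pd_fEps_one,
      inner_toLp_vecFour, zero_ne_one, one_ne_zero, ↓reduceIte] <;> ring

theorem norm_sff_fEps_sq {ε : ℝ} (hε : ε ≠ 0) (x : ℝ²) (i j : Fin 2) :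
    ‖sff (fEps ε) (uEps ε) i j x‖ ^ 2 = ε ^ 2 / (x 0 ^ 2 + x 1 ^ 2 + ε ^ 2) := by
  rw [norm_sff_sq (inner_pd_fEps hε x), Real.exp_neg, exp_two_mul_uEps hε]
  fin_cases i <;> fin_cases j <;>
    simp only [Fin.zero_eta, Fin.mk_one, Fin.isValue, pd2_fEps_zero_zero, pd2_fEps_zero_one,
      pd2_fEps_one_zero, pd2_fEps_one_one, pd_fEps_zero, pd_fEps_one, inner_toLp_vecFour,
      norm_toLp_vecFour_sq] <;> field_simp <;> ring

theorem normASq_fEps_mul_exp {ε : ℝ} (hε : ε ≠ 0) (x : ℝ²) :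
    normASq (fEps ε) (uEps ε) x * Real.exp (2 * uEps ε x) =
      4 * ε ^ 2 / (‖x‖ ^ 2 + ε ^ 2) ^ 2 := by
  rw [normASq, show -(4 * uEps ε x) = -(2 * uEps ε x) + -(2 * uEps ε x) by ring, Real.exp_add,
    Real.exp_neg]
  simp only [norm_sff_fEps_sq hε, exp_two_mul_uEps hε, Fin.sum_univ_two,
    EuclideanSpace.norm_sq_eq, Real.norm_eq_abs, sq_abs]
  field_simp
  ring

/-- The total curvature of `f_ε` over the unit disk:
`∫_D |A|²_{g_ε} dμ_{g_ε} = 4π/(1 + ε²) < 4π`. -/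
theorem stmt17 (ε : ℝ) (hε : 0 < ε) :
    (∫ x in Metric.ball (0 : EuclideanSpace ℝ (Fin 2)) 1,
        normASq (fEps ε) (uEps ε) x * Real.exp (2 * uEps ε x)) = 4 * π / (1 + ε ^ 2) ∧
    4 * π / (1 + ε ^ 2) < 4 * π := by
  refine ⟨?_, div_lt_self (by positivity) (lt_add_of_pos_right 1 (by positivity))⟩
  calc (∫ x in Metric.ball (0 : ℝ²) 1, normASq (fEps ε) (uEps ε) x * Real.exp (2 * uEps ε x))
      = ∫ x in Metric.ball (0 : ℝ²) 1, 4 * ε ^ 2 / (‖x‖ ^ 2 + ε ^ 2) ^ 2 := by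
        simp_rw [normASq_fEps_mul_exp hε.ne']
    _ = 2 * π * ∫ r in (0)..1, r * (4 * ε ^ 2 / (r ^ 2 + ε ^ 2) ^ 2) :=
        setIntegral_ball_fun_norm_fin_two (fun r => 4 * ε ^ 2 / (r ^ 2 + ε ^ 2) ^ 2) zero_le_one
    _ = 4 * π / (1 + ε ^ 2) := by
        rw [integral_mul_four_mul_sq_div_sq_add_sq_sq hε.ne']
        ring
end
end

section
/- Let f : ℂ → ℝ³ be the Enneper immersion f(z) = ½ Re(z − z³/3, i(z + z³/3), z²), and for λ > 0 let f_λ : D → ℝ³, f_λ(z) = λ^{−3} f(λ z). Then f_λ is a smooth conformal immersion with ⟨∂_i f_λ, ∂_j f_λ⟩ = ((1 + λ²|z|²)/(2λ²))² δ_{ij}, and its second fundamental form satisfies ∫_D |A|²_{g_λ} dμ_{g_λ} = 8πλ²/(1 + λ²); in particular this quantity is strictly less than 8π for every λ > 0. -/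
open MeasureTheory Real Filter Topology

noncomputable section

/-- The Enneper immersion `f(z) = ½ Re(z − z³/3, i(z + z³/3), z²)`, written in real
coordinates `z = x₀ + i x₁`. -/
def enneper (x : EuclideanSpace ℝ (Fin 2)) : EuclideanSpace ℝ (Fin 3) :=
  (WithLp.equiv 2 (Fin 3 → ℝ)).symm
    ![((x 0 + x 1 * Complex.I) - (x 0 + x 1 * Complex.I) ^ 3 / 3).re / 2,
      (Complex.I * ((x 0 + x 1 * Complex.I) + (x 0 + x 1 * Complex.I) ^ 3 / 3)).re / 2,
      (((x 0 + x 1 * Complex.I)) ^ 2).re / 2]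

/-- The rescaled Enneper immersion `f_λ(z) = λ^{−3} f(λ z)`. -/
def fLam (l : ℝ) (x : EuclideanSpace ℝ (Fin 2)) : EuclideanSpace ℝ (Fin 3) :=
  (l ^ 3)⁻¹ • enneper (l • x)

/-- The conformal factor `u_λ(z) = log((1 + λ²|z|²)/(2λ²))` of `f_λ`. -/
def uLam (l : ℝ) (x : EuclideanSpace ℝ (Fin 2)) : ℝ :=
  Real.log ((1 + l ^ 2 * (x 0 ^ 2 + x 1 ^ 2)) / (2 * l ^ 2))


/-!
`f_λ` is the real part of the polynomial curve `G(z) = λ⁻³ Φ(λz)`, where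
`Φ = ½ (z − z³/3, i(z + z³/3), z²)`. The partial derivatives of `Re G` are `∂₀ = Re G'`
and `∂₁ = Re (i G')`, so the null condition `Σₖ G'ₖ² = 0` makes `f_λ` conformal with
`e^{2u} = ½ Σₖ |G'ₖ|² = ((1 + λ²|z|²)/(2λ²))²`. The Hessian is `Re (aᵢ aⱼ G'')` with
`a₀ = 1`, `a₁ = i`; removing its tangential part gives `|A|² e^{2u} = 8λ² / (1 + λ²|z|²)²`,
a radial function whose integral over the disk is
`2π ∫₀¹ 8λ² r / (1 + λ² r²)² dr = 8πλ² / (1 + λ²)`.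
-/

open Polynomial Complex

local notation "E2" => EuclideanSpace ℝ (Fin 2)

section NullVector

variable {ι : Type*} [Fintype ι] {w : ι → ℂ}

lemma sum_re_sq_sub_sum_im_sq_of_sum_sq_eq_zero (h : ∑ k, w k ^ 2 = 0) :
    ∑ k, (w k).re ^ 2 - ∑ k, (w k).im ^ 2 = 0 := by
  simpa [← Finset.sum_sub_distrib, pow_two] using congrArg re h

lemma sum_re_mul_im_of_sum_sq_eq_zero (h : ∑ k, w k ^ 2 = 0) :
    ∑ k, (w k).re * (w k).im = 0 := by
  have him := congrArg im h
  simp only [im_sum, pow_two, mul_im, zero_im] at him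
  have hsym : ∑ k, ((w k).re * (w k).im + (w k).im * (w k).re) =
      2 * ∑ k, (w k).re * (w k).im := by
    rw [Finset.mul_sum]
    exact Finset.sum_congr rfl fun k _ => by ring
  linarith

lemma sum_norm_sq_eq_sum_re_sq_add_sum_im_sq (w : ι → ℂ) :
    ∑ k, ‖w k‖ ^ 2 = ∑ k, (w k).re ^ 2 + ∑ k, (w k).im ^ 2 := by
  rw [← Finset.sum_add_distrib]
  exact Finset.sum_congr rfl fun k _ => by rw [← normSq_eq_norm_sq, normSq_apply]; ring

end NullVector

lemma norm_sub_proj_sq_of_orthogonal {E : Type*} [NormedAddCommGroup E] [InnerProductSpace ℝ E]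
    (v t₀ t₁ : E) {s : ℝ} (h₀ : inner ℝ t₀ t₀ = s) (h₁ : inner ℝ t₁ t₁ = s)
    (h₀₁ : inner ℝ t₀ t₁ = 0) :
    ‖v - s⁻¹ • (inner ℝ v t₀ • t₀ + inner ℝ v t₁ • t₁)‖ ^ 2 =
      ‖v‖ ^ 2 - s⁻¹ * (inner ℝ v t₀ ^ 2 + inner ℝ v t₁ ^ 2) := by
  rcases eq_or_ne s 0 with rfl | hs
  · simp
  rw [← real_inner_self_eq_norm_sq, ← real_inner_self_eq_norm_sq]
  simp only [inner_sub_left, inner_sub_right, inner_add_left, inner_add_right, inner_smul_left,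
    inner_smul_right, h₀, h₁, h₀₁, real_inner_comm t₀ t₁, real_inner_comm t₀ v,
    real_inner_comm t₁ v, RCLike.conj_to_real]
  field_simp
  ring

lemma normASq_mul_exp_eq_of_conformal {n : ℕ} (f : E2 → EuclideanSpace ℝ (Fin n))
    (u : E2 → ℝ) (x : E2)
    (hconf : ∀ i j,
      inner ℝ (pd f i x) (pd f j x) = Real.exp (2 * u x) * if i = j then 1 else 0) :
    normASq f u x * Real.exp (2 * u x) = (Real.exp (2 * u x))⁻¹ * ∑ i, ∑ j,
      (‖pd2 f i j x‖ ^ 2 - (Real.exp (2 * u x))⁻¹ *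
        (inner ℝ (pd2 f i j x) (pd f 0 x) ^ 2 + inner ℝ (pd2 f i j x) (pd f 1 x) ^ 2)) := by
  have hsff : ∀ i j, ‖sff f u i j x‖ ^ 2 = ‖pd2 f i j x‖ ^ 2 - (Real.exp (2 * u x))⁻¹ *
      (inner ℝ (pd2 f i j x) (pd f 0 x) ^ 2 + inner ℝ (pd2 f i j x) (pd f 1 x) ^ 2) := by
    intro i j
    rw [sff, Real.exp_neg]
    exact norm_sub_proj_sq_of_orthogonal _ _ _ (by simpa using hconf 0 0)
      (by simpa using hconf 1 1) (by simpa using hconf 0 1)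
  simp only [normASq, hsff]
  rw [show -(4 * u x) = -(2 * u x) + -(2 * u x) by ring, Real.exp_add, Real.exp_neg]
  field_simp

lemma setIntegral_ball_fun_norm {E : Type*} [NormedAddCommGroup E] [InnerProductSpace ℝ E]
    [FiniteDimensional ℝ E] [MeasurableSpace E] [BorelSpace E] (hE : Module.finrank ℝ E = 2)
    (g : ℝ → ℝ) {R : ℝ} (hR : 0 ≤ R) :
    ∫ x in Metric.ball (0 : E) R, g ‖x‖ = 2 * π * ∫ r in (0 : ℝ)..R, r * g r := by
  have : Nontrivial E := Module.nontrivial_of_finrank_eq_succ hE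
  have hball : ∀ x : E, (Metric.ball (0 : E) R).indicator (fun x => g ‖x‖) x =
      (Set.Iio R).indicator g ‖x‖ := fun x => by
    by_cases hx : ‖x‖ < R <;> simp [Set.indicator, hx]
  have hvol : volume.real (Metric.ball (0 : E) 1) = π := by
    rw [measureReal_def, InnerProductSpace.volume_ball_of_dim_even (k := 1) hE]
    simp [pi_nonneg]
  have hradial : ∀ y : ℝ,
      y ^ (2 - 1) • (Set.Iio R).indicator g y = (Set.Iio R).indicator (fun r => r * g r) y :=
    fun y => by by_cases hy : y < R <;> simp [Set.indicator, hy]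
  rw [← integral_indicator measurableSet_ball, funext hball, integral_fun_norm_addHaar, hE, hvol,
    funext hradial, setIntegral_indicator measurableSet_Iio, Set.Ioi_inter_Iio,
    ← integral_Ioc_eq_integral_Ioo, ← intervalIntegral.integral_of_le hR]
  simp only [nsmul_eq_mul, smul_eq_mul]
  push_cast
  ring

lemma integral_mul_div_one_add_sq_sq (l : ℝ) :
    ∫ r in (0 : ℝ)..1, r * (8 * l ^ 2 / (1 + l ^ 2 * r ^ 2) ^ 2) = 4 * l ^ 2 / (1 + l ^ 2) := by
  have hpos : ∀ r : ℝ, 0 < 1 + l ^ 2 * r ^ 2 := fun r => by positivity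
  have hderiv : ∀ r ∈ Set.uIcc (0 : ℝ) 1, HasDerivAt (fun r : ℝ => -4 * (1 + l ^ 2 * r ^ 2)⁻¹)
      (r * (8 * l ^ 2 / (1 + l ^ 2 * r ^ 2) ^ 2)) r := by
    intro r _
    have h := ((((hasDerivAt_pow 2 r).const_mul (l ^ 2)).const_add 1).inv
      (hpos r).ne').const_mul (-4)
    refine h.congr_deriv ?_
    have := hpos r
    field_simp
    norm_num
    ring
  have hcont : Continuous fun r : ℝ => r * (8 * l ^ 2 / (1 + l ^ 2 * r ^ 2) ^ 2) := by
    fun_prop (disch := exact fun r => (pow_pos (hpos r) 2).ne')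
  rw [intervalIntegral.integral_eq_sub_of_hasDerivAt hderiv (hcont.intervalIntegrable 0 1)]
  have : 0 < 1 + l ^ 2 := by positivity
  field_simp
  ring

section RealPartOfPolynomialCurve

def toComplex : E2 →L[ℝ] ℂ :=
  (EuclideanSpace.proj 0 : E2 →L[ℝ] ℝ).smulRight (1 : ℂ) +
    (EuclideanSpace.proj 1 : E2 →L[ℝ] ℝ).smulRight I

@[simp] lemma toComplex_apply (x : E2) : toComplex x = x 0 + x 1 * I := by
  simp [toComplex]

lemma toComplex_single (i : Fin 2) :
    toComplex (EuclideanSpace.single i 1) = if i = 0 then 1 else I := by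
  fin_cases i <;> simp

def rePoly {n : ℕ} (p : Fin n → ℂ[X]) (x : E2) : EuclideanSpace ℝ (Fin n) :=
  WithLp.toLp 2 fun k => ((p k).eval (toComplex x)).re

variable {n : ℕ}

lemma hasFDerivAt_re_eval (p : ℂ[X]) (x : E2) :
    HasFDerivAt (fun y => (p.eval (toComplex y)).re)
      (reCLM.comp ((p.derivative.eval (toComplex x)) • toComplex)) x :=
  reCLM.hasFDerivAt.comp x ((p.hasDerivAt _).comp_hasFDerivAt x toComplex.hasFDerivAt)

lemma pd_rePoly (p : Fin n → ℂ[X]) (i : Fin 2) :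
    pd (rePoly p) i =
      rePoly fun k => C (toComplex (EuclideanSpace.single i 1)) * (p k).derivative := by
  funext x
  have h : HasFDerivAt (rePoly p) _ x := (PiLp.hasFDerivAt_toLp 2 _).comp x
    (hasFDerivAt_pi.2 fun k => hasFDerivAt_re_eval (p k) x)
  rw [pd, h.fderiv]
  ext k
  simp [rePoly, mul_comm]

lemma pd2_rePoly (p : Fin n → ℂ[X]) (i j : Fin 2) :
    pd2 (rePoly p) i j = rePoly fun k =>
      C (toComplex (EuclideanSpace.single i 1) * toComplex (EuclideanSpace.single j 1)) *
        (p k).derivative.derivative := by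
  funext x
  simp only [pd2, pd_rePoly, derivative_C_mul, C_mul, mul_assoc]

lemma contDiff_rePoly (p : Fin n → ℂ[X]) {m : WithTop ℕ∞} : ContDiff ℝ m (rePoly p) := by
  refine contDiff_piLp' 2 fun k => reCLM.contDiff.comp ?_
  have hp := ((p k).contDiff_aeval (𝕜 := ℂ) m).restrict_scalars ℝ
  simp only [coe_aeval_eq_eval] at hp
  exact hp.comp toComplex.contDiff

lemma smul_rePoly_smul (c l : ℝ) (p : Fin n → ℂ[X]) (x : E2) :
    c • rePoly p (l • x) = rePoly (fun k => C (c : ℂ) * (p k).comp (C (l : ℂ) * X)) x := by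
  ext k
  simp only [rePoly, PiLp.smul_apply, map_smul, real_smul, eval_mul, eval_C, eval_comp, eval_X,
    re_ofReal_mul, smul_eq_mul]

lemma inner_rePoly (p q : Fin n → ℂ[X]) (x : E2) :
    inner ℝ (rePoly p x) (rePoly q x) =
      ∑ k, ((p k).eval (toComplex x)).re * ((q k).eval (toComplex x)).re := by
  simp [rePoly, PiLp.inner_apply, mul_comm]

lemma inner_pd_rePoly_of_null (p : Fin n → ℂ[X]) (x : E2)
    (hnull : ∑ k, ((p k).derivative.eval (toComplex x)) ^ 2 = 0) (i j : Fin 2) :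
    inner ℝ (pd (rePoly p) i x) (pd (rePoly p) j x) =
      (∑ k, ‖(p k).derivative.eval (toComplex x)‖ ^ 2) / 2 * if i = j then 1 else 0 := by
  have hre := sum_re_sq_sub_sum_im_sq_of_sum_sq_eq_zero hnull
  have him := sum_re_mul_im_of_sum_sq_eq_zero hnull
  rw [sum_norm_sq_eq_sum_re_sq_add_sum_im_sq]
  simp only [pd_rePoly, inner_rePoly, toComplex_single, eval_mul, eval_C]
  fin_cases i <;> fin_cases j <;> simp [pow_two, mul_comm] at * <;> linarith

end RealPartOfPolynomialCurve

lemma derivative_C_mul_comp_C_mul_X {R : Type*} [CommSemiring R] (c l : R) (p : R[X]) :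
    derivative (C c * p.comp (C l * X)) = C (c * l) * (derivative p).comp (C l * X) := by
  simp [derivative_comp, C_mul]
  ring

section Enneper

def enneperPoly : Fin 3 → ℂ[X] :=
  ![C (1 / 2) * (X - C (1 / 3) * X ^ 3), C (I / 2) * (X + C (1 / 3) * X ^ 3), C (1 / 2) * X ^ 2]

def enneperLam (l : ℝ) : Fin 3 → ℂ[X] :=
  fun k => C (((l ^ 3)⁻¹ : ℝ) : ℂ) * (enneperPoly k).comp (C (l : ℂ) * X)

lemma enneper_eq_rePoly : enneper = rePoly enneperPoly := by
  funext x
  ext k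
  fin_cases k <;> simp [enneper, rePoly, enneperPoly] <;> ring_nf

lemma fLam_eq_rePoly (l : ℝ) : fLam l = rePoly (enneperLam l) := by
  funext x
  rw [fLam, enneper_eq_rePoly, smul_rePoly_smul]
  rfl

variable {l : ℝ}

lemma eval_derivative_enneperLam (z : ℂ) (k : Fin 3) :
    (enneperLam l k).derivative.eval z =
      ![(1 - l ^ 2 * z ^ 2) / (2 * l ^ 2), I * (1 + l ^ 2 * z ^ 2) / (2 * l ^ 2), z / l] k := by
  simp only [enneperLam, derivative_C_mul_comp_C_mul_X, eval_mul, eval_C, eval_comp, eval_X]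
  fin_cases k <;> simp [enneperPoly] <;> field_simp <;> ring

lemma eval_derivative_derivative_enneperLam (hl : l ≠ 0) (z : ℂ) (k : Fin 3) :
    (enneperLam l k).derivative.derivative.eval z = ![-z, I * z, 1 / l] k := by
  have : (l : ℂ) ≠ 0 := by exact_mod_cast hl
  simp only [enneperLam, derivative_C_mul_comp_C_mul_X, eval_mul, eval_C, eval_comp, eval_X]
  fin_cases k <;> simp [enneperPoly] <;> field_simp <;> ring

lemma sum_sq_eval_derivative_enneperLam (z : ℂ) :
    ∑ k, ((enneperLam l k).derivative.eval z) ^ 2 = 0 := by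
  simp [Fin.sum_univ_three, eval_derivative_enneperLam, div_pow, mul_pow]
  field_simp
  ring

lemma sum_norm_sq_eval_derivative_enneperLam (hl : l ≠ 0) (z : ℂ) :
    ∑ k, ‖(enneperLam l k).derivative.eval z‖ ^ 2 = (1 + l ^ 2 * ‖z‖ ^ 2) ^ 2 / (2 * l ^ 4) := by
  simp only [Fin.sum_univ_three, eval_derivative_enneperLam, ← normSq_eq_norm_sq]
  simp [normSq_apply, pow_two]
  field_simp
  ring

lemma inner_pd_fLam (hl : l ≠ 0) (x : E2) (i j : Fin 2) :
    inner ℝ (pd (fLam l) i x) (pd (fLam l) j x) =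
      ((1 + l ^ 2 * (x 0 ^ 2 + x 1 ^ 2)) / (2 * l ^ 2)) ^ 2 * if i = j then 1 else 0 := by
  rw [fLam_eq_rePoly, inner_pd_rePoly_of_null _ _ (sum_sq_eval_derivative_enneperLam _),
    sum_norm_sq_eval_derivative_enneperLam hl, ← normSq_eq_norm_sq]
  simp [normSq_apply, pow_two]
  field_simp

lemma exp_two_mul_uLam (hl : l ≠ 0) (x : E2) :
    Real.exp (2 * uLam l x) = ((1 + l ^ 2 * (x 0 ^ 2 + x 1 ^ 2)) / (2 * l ^ 2)) ^ 2 := by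
  rw [uLam, ← Real.log_rpow (by positivity), Real.exp_log (by positivity)]
  norm_cast

lemma contDiff_uLam (hl : l ≠ 0) {m : WithTop ℕ∞} : ContDiff ℝ m (uLam l) := by
  refine ContDiff.log ?_ fun x => by positivity
  fun_prop

lemma normASq_fLam_mul_exp_two_mul_uLam (hl : l ≠ 0) (x : E2) :
    normASq (fLam l) (uLam l) x * Real.exp (2 * uLam l x) =
      8 * l ^ 2 / (1 + l ^ 2 * ‖x‖ ^ 2) ^ 2 := by
  rw [normASq_mul_exp_eq_of_conformal _ _ _ fun i j => by
      rw [inner_pd_fLam hl, exp_two_mul_uLam hl],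
    exp_two_mul_uLam hl, EuclideanSpace.norm_sq_eq]
  simp only [← real_inner_self_eq_norm_sq, fLam_eq_rePoly, pd2_rePoly, pd_rePoly, inner_rePoly]
  simp [Fin.sum_univ_two, Fin.sum_univ_three, eval_derivative_enneperLam,
    eval_derivative_derivative_enneperLam hl, div_re, div_im, normSq_apply, pow_two]
  field_simp
  ring

end Enneper

/-- `f_λ` is conformal with factor `(1 + λ²|z|²)/(2λ²)` and its total curvature over the unit
disk equals `8πλ²/(1 + λ²) < 8π`. -/
theorem stmt18 (l : ℝ) (hl : 0 < l) :
    (∀ x : EuclideanSpace ℝ (Fin 2), ∀ i j : Fin 2,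
      (inner ℝ (pd (fLam l) i x) (pd (fLam l) j x) : ℝ) =
        ((1 + l ^ 2 * (x 0 ^ 2 + x 1 ^ 2)) / (2 * l ^ 2)) ^ 2 * (if i = j then 1 else 0)) ∧
    IsConfImm Set.univ (fLam l) (uLam l) ∧
    (∫ x in Metric.ball (0 : EuclideanSpace ℝ (Fin 2)) 1,
        normASq (fLam l) (uLam l) x * Real.exp (2 * uLam l x))
      = 8 * π * l ^ 2 / (1 + l ^ 2) ∧
    8 * π * l ^ 2 / (1 + l ^ 2) < 8 * π := by
  have hl0 := hl.ne'
  refine ⟨inner_pd_fLam hl0, ⟨?_, (contDiff_uLam hl0).contDiffOn, ?_⟩, ?_, ?_⟩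
  · exact fLam_eq_rePoly l ▸ (contDiff_rePoly _).contDiffOn
  · intro x _ i j
    rw [inner_pd_fLam hl0, exp_two_mul_uLam hl0]
  · calc _ = ∫ x in Metric.ball (0 : E2) 1, 8 * l ^ 2 / (1 + l ^ 2 * ‖x‖ ^ 2) ^ 2 :=
          setIntegral_congr_fun measurableSet_ball fun x _ =>
            normASq_fLam_mul_exp_two_mul_uLam hl0 x
      _ = 2 * π * ∫ r in (0 : ℝ)..1, r * (8 * l ^ 2 / (1 + l ^ 2 * r ^ 2) ^ 2) :=
          setIntegral_ball_fun_norm finrank_euclideanSpace_fin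
            (fun r => 8 * l ^ 2 / (1 + l ^ 2 * r ^ 2) ^ 2) zero_le_one
      _ = 8 * π * l ^ 2 / (1 + l ^ 2) := by
          rw [integral_mul_div_one_add_sq_sq]
          ring
  · rw [div_lt_iff₀ (by positivity)]
    nlinarith [pi_pos]
end
end
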